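/- arXiv:1110.5008 — 8 statements merged into one kernel-verified Lean document; each statement's English description precedes it below -/
import Mathlib

section
/- Let G be a group and let A, B be finite nonempty subsets of G. Then there exists a finite set X ⊆ B with |X| ≤ |A·B| / |A| such that B ⊆ A⁻¹·A·X. -/
open Pointwise

namespace Finset

variable {G : Type*} [Group G] [DecidableEq G] {A B : Finset G} {K : ℝ}

/- Inversion reverses products, so the left-translate covering `Finset.ruzsa_covering_mul`, applied
to `B⁻¹` and `A⁻¹` and then inverted, gives this right-translate version. -/
theorem ruzsa_covering_inv_mul (hA : A.Nonempty) (hK : #(A * B) ≤ K * #A) :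
    ∃ X ⊆ B, #X ≤ K ∧ B ⊆ A⁻¹ * A * X := by
  have hK' : #(B⁻¹ * A⁻¹) ≤ K * #A⁻¹ := by rwa [← mul_inv_rev, card_inv, card_inv]
  obtain ⟨F, hFB, hFcard, hBF⟩ := ruzsa_covering_mul hA.inv hK'
  refine ⟨F⁻¹, by simpa only [inv_inv] using inv_subset_inv hFB, by rwa [card_inv], ?_⟩
  simpa only [div_eq_mul_inv, mul_inv_rev, inv_inv, mul_assoc] using inv_subset_inv hBF

end Finset

theorem ruzsa_covering_general {G : Type*} [Group G] [DecidableEq G]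
    (A B : Finset G) (hA : A.Nonempty) :
    ∃ X : Finset G, X ⊆ B ∧ (X.card : ℝ) ≤ ((A * B).card : ℝ) / (A.card : ℝ) ∧
      B ⊆ A⁻¹ * A * X := by
  have hAcard : (A.card : ℝ) ≠ 0 := by exact_mod_cast hA.card_pos.ne'
  exact Finset.ruzsa_covering_inv_mul hA (div_mul_cancel₀ _ hAcard).ge

theorem ruzsa_covering {G : Type*} [Group G] [DecidableEq G]
    (A B : Finset G) (hA : A.Nonempty) (hB : B.Nonempty) :
    ∃ X : Finset G, X ⊆ B ∧ (X.card : ℝ) ≤ ((A * B).card : ℝ) / (A.card : ℝ) ∧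
      B ⊆ A⁻¹ * A * X :=
  ruzsa_covering_general A B hA
end

section
/- Let G be a group and let A be a finite symmetric subset of G containing the identity, with |A^5| ≤ K·|A| for some real K ≥ 1. Then A² is a 2K-approximate group: A² is symmetric, contains the identity, and there exists a symmetric set X ⊆ (A²)³ with |X| ≤ 2K such that A²·A² ⊆ X·A². -/
/-!
Ruzsa's covering lemma applied to `A⁴` and `A`, using `|A⁴ · A| = |A⁵| ≤ K|A|`, covers `A⁴` by at
most `K` translates `f · A⁻¹A = f · A²` with `f ∈ A⁴`. Adding the inverses of the centres makes the
set of centres symmetric at the cost of doubling its size, and it still lies in `A⁴ ⊆ A⁶`.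
-/

open Pointwise

namespace Finset

variable {G : Type*} [Group G] [DecidableEq G]

lemma inv_union_self_inv (F : Finset G) : (F ∪ F⁻¹)⁻¹ = F ∪ F⁻¹ := by
  ext x; simp [mem_inv', or_comm]

lemma card_union_inv_le (F : Finset G) : #(F ∪ F⁻¹) ≤ 2 * #F := by
  calc #(F ∪ F⁻¹) ≤ #F + #F⁻¹ := card_union_le _ _
    _ = 2 * #F := by rw [card_inv, two_mul]

lemma union_inv_subset_of_subset {F B : Finset G} (hB : B⁻¹ = B) (hF : F ⊆ B) :
    F ∪ F⁻¹ ⊆ B :=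
  union_subset hF (hB ▸ inv_subset_inv hF)

theorem ruzsa_covering_mul_symmetric {K : ℝ} {A B : Finset G} (hA : A⁻¹ = A) (hA₀ : A.Nonempty)
    (hK : #(B * A) ≤ K * #A) :
    ∃ X ⊆ B ∪ B⁻¹, X⁻¹ = X ∧ #X ≤ 2 * K ∧ B ⊆ X * A ^ 2 := by
  obtain ⟨F, hFB, hFcard, hBF⟩ := ruzsa_covering_mul hA₀ hK
  refine ⟨F ∪ F⁻¹, union_subset_union hFB (inv_subset_inv hFB), inv_union_self_inv F, ?_, ?_⟩
  · calc (#(F ∪ F⁻¹) : ℝ) ≤ 2 * #F := by exact_mod_cast card_union_inv_le F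
      _ ≤ 2 * K := by linarith
  · calc B ⊆ F * (A / A) := hBF
      _ = F * A ^ 2 := by rw [div_eq_mul_inv, hA, sq]
      _ ⊆ (F ∪ F⁻¹) * A ^ 2 := mul_subset_mul_right subset_union_left

end Finset

open Finset in
theorem square_is_approximate_group_general {G : Type*} [Group G] [DecidableEq G]
    (K : ℝ) (A : Finset G) (h1 : (1 : G) ∈ A) (hsym : A⁻¹ = A)
    (h5 : ((A ^ 5).card : ℝ) ≤ K * (A.card : ℝ)) :
    (1 : G) ∈ A ^ 2 ∧ (A ^ 2)⁻¹ = A ^ 2 ∧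
      ∃ X : Finset G, X ⊆ (A ^ 2) ^ 3 ∧ X⁻¹ = X ∧ (X.card : ℝ) ≤ 2 * K ∧
        A ^ 2 * A ^ 2 ⊆ X * A ^ 2 := by
  have hpow_inv (n : ℕ) : (A ^ n)⁻¹ = A ^ n := by rw [← inv_pow, hsym]
  obtain ⟨X, hX, hXinv, hXcard, hcover⟩ :=
    ruzsa_covering_mul_symmetric (B := A ^ 4) hsym ⟨1, h1⟩ (by rwa [← pow_succ])
  refine ⟨one_mem_pow h1, hpow_inv 2, X, ?_, hXinv, hXcard, by rwa [← pow_add]⟩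
  calc X ⊆ A ^ 4 := hX.trans (union_inv_subset_of_subset (hpow_inv 4) subset_rfl)
    _ ⊆ (A ^ 2) ^ 3 := by rw [← pow_mul]; exact pow_subset_pow_right h1 (by norm_num)

theorem square_is_approximate_group {G : Type*} [Group G] [DecidableEq G]
    (K : ℝ) (hK : 1 ≤ K) (A : Finset G) (h1 : (1 : G) ∈ A) (hsym : A⁻¹ = A)
    (h5 : ((A ^ 5).card : ℝ) ≤ K * (A.card : ℝ)) :
    (1 : G) ∈ A ^ 2 ∧ (A ^ 2)⁻¹ = A ^ 2 ∧
      ∃ X : Finset G, X ⊆ (A ^ 2) ^ 3 ∧ X⁻¹ = X ∧ (X.card : ℝ) ≤ 2 * K ∧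
        A ^ 2 * A ^ 2 ⊆ X * A ^ 2 :=
  square_is_approximate_group_general K A h1 hsym h5
end

section
/- Let G be a group, A a finite K-approximate subgroup of G (symmetric, containing the identity, A² covered by K left-translates of A), and G' a subgroup of G. Then A² ∩ G' is a K³-approximate group, and A⁴ ∩ G' can be covered by at most K³ left-translates of A² ∩ G'. -/
/-!
Since `A² ⊆ XA`, we get `A⁴ ⊆ X³A`, and a translate `xA` meeting `G'` at `g'` satisfies
`xA ∩ G' ⊆ g'(A⁻¹A ∩ G') = g'(A² ∩ G')`; so `K³` translates of `A² ∩ G'` cover `A⁴ ∩ G'`, which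
contains `(A² ∩ G')²`. Viewing `G'` as a `1`-approximate subgroup, this is Mathlib's
`IsApproximateSubgroup.pow_inter_pow` together with
`IsApproximateSubgroup.pow_inter_pow_covBySMul_sq_inter_sq`, transported from sets to finsets.
-/

open scoped Pointwise Finset

theorem Finset.covBySMul_coe_iff {G : Type*} [Group G] [DecidableEq G] {K : ℝ}
    {S T : Finset G} :
    CovBySMul G K (S : Set G) T ↔ ∃ X : Finset G, #X ≤ K ∧ S ⊆ X * T := by
  simp only [CovBySMul, ← Finset.coe_subset, Finset.coe_mul]
  rfl

theorem Finset.isApproximateSubgroup_coe_iff {G : Type*} [Group G] [DecidableEq G] {K : ℝ}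
    {A : Finset G} :
    IsApproximateSubgroup K (A : Set G) ↔
      1 ∈ A ∧ A⁻¹ = A ∧ ∃ X : Finset G, #X ≤ K ∧ A * A ⊆ X * A := by
  rw [← Finset.coe_inj, ← sq, ← Finset.covBySMul_coe_iff, Finset.coe_pow, Finset.coe_inv]
  exact ⟨fun ⟨h₁, h₂, h₃⟩ ↦ ⟨h₁, h₂, h₃⟩, fun ⟨h₁, h₂, h₃⟩ ↦ ⟨h₁, h₂, h₃⟩⟩

theorem Finset.coe_filter_pow_mem_subgroup {G : Type*} [Group G] [DecidableEq G]
    (A : Finset G) (H : Subgroup G) [DecidablePred (· ∈ H)] (m : ℕ) {n : ℕ} (hn : n ≠ 0) :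
    ((A ^ m).filter (· ∈ H) : Set G) = (A : Set G) ^ m ∩ (H : Set G) ^ n := by
  rw [coe_set_pow hn, Finset.coe_filter, ← Finset.coe_pow]
  rfl

theorem slicing_by_subgroup {G : Type*} [Group G] [DecidableEq G] (K : ℕ)
    (A : Finset G) (h1 : (1 : G) ∈ A) (hsym : A⁻¹ = A)
    (hcov : ∃ X : Finset G, X.card ≤ K ∧ A * A ⊆ X * A)
    (G' : Subgroup G) [DecidablePred (· ∈ G')] :
    ((1 : G) ∈ (A ^ 2).filter (· ∈ G') ∧
        ((A ^ 2).filter (· ∈ G'))⁻¹ = (A ^ 2).filter (· ∈ G') ∧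
        ∃ Y : Finset G, Y.card ≤ K ^ 3 ∧
          ((A ^ 2).filter (· ∈ G')) * ((A ^ 2).filter (· ∈ G')) ⊆
            Y * ((A ^ 2).filter (· ∈ G'))) ∧
      ∃ Z : Finset G, Z.card ≤ K ^ 3 ∧
        (A ^ 4).filter (· ∈ G') ⊆ Z * ((A ^ 2).filter (· ∈ G')) := by
  obtain ⟨X, hXK, hAX⟩ := hcov
  have hA : IsApproximateSubgroup (K : ℝ) (A : Set G) :=
    Finset.isApproximateSubgroup_coe_iff.2 ⟨h1, hsym, X, by exact_mod_cast hXK, hAX⟩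
  have hG' : IsApproximateSubgroup 1 (G' : Set G) := .subgroup
  have hslice := hA.pow_inter_pow hG' le_rfl le_rfl
  have hcover := hA.pow_inter_pow_covBySMul_sq_inter_sq hG' (m := 4) (n := 2) (by norm_num) le_rfl
  rw [← Finset.coe_filter_pow_mem_subgroup A G' 2 two_ne_zero] at hslice hcover
  rw [← Finset.coe_filter_pow_mem_subgroup A G' 4 two_ne_zero, Finset.covBySMul_coe_iff] at hcover
  rw [Finset.isApproximateSubgroup_coe_iff] at hslice
  obtain ⟨h1', hsym', Y, hY, hAY⟩ := hslice
  obtain ⟨Z, hZ, hAZ⟩ := hcover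
  norm_num only [one_pow, mul_one] at hY hZ
  exact ⟨⟨h1', hsym', Y, by exact_mod_cast hY, hAY⟩, Z, by exact_mod_cast hZ, hAZ⟩
end

section
/- Suppose A is a finite K-approximate group in a group G and A₁, A₂ ⊆ A satisfy |A₁| = δ₁|A| and |A₂| = δ₂|A|. Then A₁·A₁⁻¹ ∩ A₂·A₂⁻¹ contains a set of the form B·B⁻¹ where B ⊆ A and |B| ≥ δ₁δ₂|A|/K. -/
/-!
Count the pairs `(a₁, a₂) ∈ A₁ × A₂` by the value of `a₁⁻¹ a₂`. These values lie in
`A₁⁻¹ A₂ ⊆ A A`, a set of size at most `K |A|`, so some `x` has at least `|A₁| |A₂| / (K |A|)`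
representations. The set `B` of second coordinates `a₂` of these representations lies in `A₂`
and in the right translate `A₁ x`, hence `B B⁻¹` lies in both `A₂ A₂⁻¹` and `A₁ A₁⁻¹`.
-/

open Pointwise

namespace Finset

variable {G : Type*} [Group G] [DecidableEq G]

/-- The second coordinates of the representations `x = s⁻¹ * t`, `s ∈ S`, `t ∈ T`. -/
def invMulReprs (S T : Finset G) (x : G) : Finset G := {t ∈ T | t * x⁻¹ ∈ S}

lemma invMulReprs_subset_right (S T : Finset G) (x : G) : invMulReprs S T x ⊆ T :=
  filter_subset _ _

lemma card_filter_inv_mul_eq (S T : Finset G) (x : G) :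
    #{p ∈ S ×ˢ T | p.1⁻¹ * p.2 = x} = #(invMulReprs S T x) :=
  card_nbij' Prod.snd (fun t ↦ (t * x⁻¹, t))
    (by
      rintro ⟨a, b⟩ h
      simp only [coe_filter, mem_product, Set.mem_ofPred_eq] at h
      obtain ⟨⟨ha, hb⟩, rfl⟩ := h
      simpa [invMulReprs, hb] using ha)
    (by simp +contextual [Set.MapsTo, invMulReprs, mul_assoc])
    (by
      rintro ⟨a, b⟩ h
      simp only [coe_filter, mem_product, Set.mem_ofPred_eq] at h
      obtain ⟨-, rfl⟩ := h
      simp)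
    (by simp [Set.LeftInvOn])

lemma exists_card_mul_card_le_mul_card_invMulReprs (S T : Finset G) :
    ∃ x, #S * #T ≤ #(S⁻¹ * T) * #(invMulReprs S T x) := by
  rcases (S⁻¹ * T).eq_empty_or_nonempty with hempty | hne
  · refine ⟨1, ?_⟩
    rcases mul_eq_empty.mp hempty with h | h <;> simp_all
  have hmaps : ∀ p ∈ S ×ˢ T, p.1⁻¹ * p.2 ∈ S⁻¹ * T := fun p hp ↦
    mul_mem_mul (inv_mem_inv (mem_product.mp hp).1) (mem_product.mp hp).2
  have hpos : (0 : ℝ) < #(S⁻¹ * T) := by exact_mod_cast hne.card_pos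
  obtain ⟨x, -, hx⟩ := exists_le_card_fiber_of_nsmul_le_card_of_maps_to hmaps hne
    (b := (#S * #T / #(S⁻¹ * T) : ℝ)) (by
      rw [nsmul_eq_mul, mul_div_cancel₀ _ hpos.ne', card_product, Nat.cast_mul])
  refine ⟨x, ?_⟩
  rw [card_filter_inv_mul_eq, div_le_iff₀ hpos] at hx
  exact_mod_cast hx.trans_eq (mul_comm _ _)

lemma invMulReprs_mul_inv_subset (S T : Finset G) (x : G) :
    invMulReprs S T x * (invMulReprs S T x)⁻¹ ⊆ S * S⁻¹ ∩ (T * T⁻¹) := by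
  intro y hy
  obtain ⟨b₁, hb₁, _, hb₂', rfl⟩ := mem_mul.mp hy
  obtain ⟨b₂, hb₂, rfl⟩ := mem_inv.mp hb₂'
  simp only [invMulReprs, mem_filter] at hb₁ hb₂
  refine mem_inter.mpr ⟨?_, mul_mem_mul hb₁.1 (inv_mem_inv hb₂.1)⟩
  have hsplit : b₁ * b₂⁻¹ = b₁ * x⁻¹ * (b₂ * x⁻¹)⁻¹ := by group
  exact hsplit ▸ mul_mem_mul hb₁.2 (inv_mem_inv hb₂.2)

lemma card_inv_mul_le_of_mul_subset {A S T X : Finset G} (hsym : A⁻¹ = A)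
    (hcov : A * A ⊆ X * A) (hS : S ⊆ A) (hT : T ⊆ A) : #(S⁻¹ * T) ≤ #X * #A :=
  (card_le_card ((mul_subset_mul (hsym ▸ inv_subset_inv hS) hT).trans hcov)).trans card_mul_le

end Finset

open Finset

theorem common_symmetric_subset_general {G : Type*} [Group G] [DecidableEq G]
    (K δ₁ δ₂ : ℝ)
    (A A₁ A₂ : Finset G) (hsym : A⁻¹ = A)
    (hcov : ∃ X : Finset G, (X.card : ℝ) ≤ K ∧ A * A ⊆ X * A)
    (hA₁ : A₁ ⊆ A) (hA₂ : A₂ ⊆ A)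
    (hd₁ : (A₁.card : ℝ) = δ₁ * A.card) (hd₂ : (A₂.card : ℝ) = δ₂ * A.card) :
    ∃ B : Finset G, B ⊆ A ∧ δ₁ * δ₂ * A.card / K ≤ (B.card : ℝ) ∧
      B * B⁻¹ ⊆ A₁ * A₁⁻¹ ∩ (A₂ * A₂⁻¹) := by
  obtain ⟨X, hXK, hXA⟩ := hcov
  obtain ⟨x, hx⟩ := exists_card_mul_card_le_mul_card_invMulReprs A₁ A₂
  set B := invMulReprs A₁ A₂ x
  refine ⟨B, (invMulReprs_subset_right _ _ _).trans hA₂, ?_, invMulReprs_mul_inv_subset _ _ _⟩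
  have hcount : (#A₁ * #A₂ : ℝ) ≤ #A * (K * #B) :=
    calc (#A₁ * #A₂ : ℝ) ≤ #(A₁⁻¹ * A₂) * #B := by exact_mod_cast hx
      _ ≤ #X * #A * #B := by
        gcongr; exact_mod_cast card_inv_mul_le_of_mul_subset hsym hXA hA₁ hA₂
      _ = #A * (#X * #B) := by ring
      _ ≤ #A * (K * #B) := by gcongr
  have hK : 0 ≤ K := (Nat.cast_nonneg _).trans hXK
  refine div_le_of_le_mul₀ hK (by positivity) ?_
  rcases (Nat.cast_nonneg (α := ℝ) #A).eq_or_lt with hA | hA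
  · rw [← hA, mul_zero]; positivity
  · rw [hd₁, hd₂] at hcount
    nlinarith

theorem common_symmetric_subset {G : Type*} [Group G] [DecidableEq G]
    (K δ₁ δ₂ : ℝ) (hK : 1 ≤ K)
    (A A₁ A₂ : Finset G) (h1 : (1 : G) ∈ A) (hsym : A⁻¹ = A)
    (hcov : ∃ X : Finset G, (X.card : ℝ) ≤ K ∧ A * A ⊆ X * A)
    (hA₁ : A₁ ⊆ A) (hA₂ : A₂ ⊆ A)
    (hd₁ : (A₁.card : ℝ) = δ₁ * A.card) (hd₂ : (A₂.card : ℝ) = δ₂ * A.card) :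
    ∃ B : Finset G, B ⊆ A ∧ δ₁ * δ₂ * A.card / K ≤ (B.card : ℝ) ∧
      B * B⁻¹ ⊆ A₁ * A₁⁻¹ ∩ (A₂ * A₂⁻¹) :=
  common_symmetric_subset_general K δ₁ δ₂ A A₁ A₂ hsym hcov hA₁ hA₂ hd₁ hd₂
end

section
/- Let G be a group acting by isometries on a metric space X, acting discretely in the sense that for every x ∈ X and every bounded Σ ⊆ X the set {γ : γ·x ∈ Σ} is finite. Suppose every ball of radius 4 in X can be covered by K balls of radius 1. Then for every x ∈ X, the set S₂(x) := {γ : d(γ·x, x) ≤ 2} satisfies |S₂(x)·S₂(x)| ≤ K·|S₂(x)|. -/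
/-!
An element of `S₂(x) * S₂(x)` moves `x` by at most `4`, so it suffices to bound `|S₄(x)|`.
Cover `B(x, 4)` by `K` unit balls. All `γ ∈ S₄(x)` whose orbit point `γ • x` lands in a given
unit ball differ from one another by elements of `S₂(x)`, so each ball accounts for at most
`|S₂(x)|` of them.
-/

open Pointwise Metric

section AlmostStabilizer

variable (Γ : Type*) {X : Type*} [Group Γ] [MetricSpace X] [MulAction Γ X]

/-- The paper's `S_r(x)`. -/
def almostStabilizer (x : X) (r : ℝ) : Set Γ := {γ | dist (γ • x) x ≤ r}

variable {Γ}

lemma finite_almostStabilizer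
    (hdisc : ∀ (x : X) (B : Set X), Bornology.IsBounded B → {γ : Γ | γ • x ∈ B}.Finite)
    (x : X) (r : ℝ) : (almostStabilizer Γ x r).Finite :=
  hdisc x (closedBall x r) isBounded_closedBall

variable [IsIsometricSMul Γ X]

lemma mul_almostStabilizer_subset (x : X) (r s : ℝ) :
    almostStabilizer Γ x r * almostStabilizer Γ x s ⊆ almostStabilizer Γ x (r + s) := by
  rintro _ ⟨a, ha, b, hb, rfl⟩
  calc dist ((a * b) • x) x ≤ dist (a • b • x) (a • x) + dist (a • x) x := by
        rw [mul_smul]; exact dist_triangle _ _ _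
    _ ≤ r + s := by rw [dist_smul, add_comm r]; exact add_le_add hb ha

lemma setOf_smul_mem_closedBall_subset {x y : X} {ρ : ℝ} {g : Γ}
    (hg : g • x ∈ closedBall y ρ) :
    {γ : Γ | γ • x ∈ closedBall y ρ} ⊆ g • almostStabilizer Γ x (2 * ρ) := by
  intro γ (hγ : dist (γ • x) y ≤ ρ)
  rw [Set.mem_smul_set_iff_inv_smul_mem]
  calc dist ((g⁻¹ • γ) • x) x = dist (γ • x) (g • x) := by
        rw [smul_eq_mul, mul_smul, ← dist_smul g, smul_inv_smul]
    _ ≤ dist (γ • x) y + dist (g • x) y := dist_triangle_right _ _ _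
    _ ≤ 2 * ρ := by linarith [mem_closedBall.1 hg]

lemma exists_setOf_smul_mem_closedBall_subset (x y : X) (ρ : ℝ) :
    ∃ g : Γ, {γ : Γ | γ • x ∈ closedBall y ρ} ⊆ g • almostStabilizer Γ x (2 * ρ) := by
  rcases Set.eq_empty_or_nonempty {γ : Γ | γ • x ∈ closedBall y ρ} with hempty | ⟨g, hg⟩
  · exact ⟨1, hempty ▸ Set.empty_subset _⟩
  · exact ⟨g, setOf_smul_mem_closedBall_subset hg⟩

lemma ncard_almostStabilizer_le_card_mul {x : X} {R ρ : ℝ}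
    (hfin : (almostStabilizer Γ x (2 * ρ)).Finite)
    (T : Finset X) (hT : closedBall x R ⊆ ⋃ y ∈ T, closedBall y ρ) :
    (almostStabilizer Γ x R).ncard ≤ T.card * (almostStabilizer Γ x (2 * ρ)).ncard := by
  set A : X → Set Γ := fun y => {γ | γ • x ∈ closedBall y ρ}
  have hA : ∀ y, (A y).Finite ∧ (A y).ncard ≤ (almostStabilizer Γ x (2 * ρ)).ncard := by
    intro y
    obtain ⟨g, hg⟩ := exists_setOf_smul_mem_closedBall_subset (Γ := Γ) x y ρ
    exact ⟨hfin.smul_set.subset hg,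
      (Set.ncard_le_ncard hg hfin.smul_set).trans_eq (Set.ncard_smul_set g _)⟩
  have hcover : almostStabilizer Γ x R ⊆ ⋃ y ∈ T, A y := fun γ hγ => by
    simpa [A] using hT (mem_closedBall.2 hγ)
  calc (almostStabilizer Γ x R).ncard
      ≤ (⋃ y ∈ T, A y).ncard :=
        Set.ncard_le_ncard hcover (T.finite_toSet.biUnion fun y _ => (hA y).1)
    _ ≤ ∑ y ∈ T, (A y).ncard := T.set_ncard_biUnion_le A
    _ ≤ ∑ _y ∈ T, (almostStabilizer Γ x (2 * ρ)).ncard := Finset.sum_le_sum fun y _ => (hA y).2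
    _ = T.card * (almostStabilizer Γ x (2 * ρ)).ncard := by rw [Finset.sum_const, smul_eq_mul]

end AlmostStabilizer

theorem almost_stabiliser_doubling {Γ X : Type*} [Group Γ] [MetricSpace X] [MulAction Γ X]
    (hiso : ∀ γ : Γ, Isometry fun x : X => γ • x)
    (hdisc : ∀ (x : X) (B : Set X), Bornology.IsBounded B → {γ : Γ | γ • x ∈ B}.Finite)
    (K : ℕ)
    (hpack : ∀ x : X, ∃ T : Finset X, T.card ≤ K ∧
      Metric.closedBall x 4 ⊆ ⋃ y ∈ T, Metric.closedBall y 1)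
    (x : X) :
    ({γ : Γ | dist (γ • x) x ≤ 2} * {γ : Γ | dist (γ • x) x ≤ 2}).ncard
      ≤ K * {γ : Γ | dist (γ • x) x ≤ 2}.ncard := by
  have : IsIsometricSMul Γ X := ⟨hiso⟩
  obtain ⟨T, hTK, hT⟩ := hpack x
  have hS₂ : almostStabilizer Γ x 2 = almostStabilizer Γ x (2 * 1) := by norm_num
  have hS₄ : almostStabilizer Γ x (2 + 2) = almostStabilizer Γ x 4 := by norm_num
  calc (almostStabilizer Γ x 2 * almostStabilizer Γ x 2).ncard
      ≤ (almostStabilizer Γ x 4).ncard :=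
        Set.ncard_le_ncard (hS₄ ▸ mul_almostStabilizer_subset x 2 2)
          (finite_almostStabilizer hdisc x 4)
    _ ≤ T.card * (almostStabilizer Γ x 2).ncard := by
        rw [hS₂]; exact ncard_almostStabilizer_le_card_mul (finite_almostStabilizer hdisc x _) T hT
    _ ≤ K * (almostStabilizer Γ x 2).ncard := Nat.mul_le_mul_right _ hTK
end

section
/- Let G be a group generated by a finite symmetric set S containing the identity, let E ⊆ G be finite with |E| < |G|/2 (interpreting |G|/2 = ∞ if G is infinite), and define the boundary ∂E := S·E \ E. Let r(E) be the least r with |S^r| ≥ 2|E|. Then |E| ≤ 4·r(E)·|∂E|. -/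
/-!
Compare `E` with its translates `g • E` for `g` in the ball `B = S ^ r`. Moving `E` by one
generator changes it in at most `|∂E|` points, so `|g • E \ E| ≤ r |∂E|` for every `g ∈ B`.
On the other hand, double counting shows that on average over `B` the translate `g • E` meets
`E` in at most `|E|² / |B| ≤ |E| / 2` points once `|B| ≥ 2 |E|`. Hence `|E| / 2 ≤ r |∂E|`.
-/

open Pointwise

namespace Finset

variable {G : Type*} [Group G] [DecidableEq G]

theorem card_mul_smul_finset_sdiff_le (a b : G) (E : Finset G) :
    #(((a * b) • E) \ E) ≤ #((b • E) \ E) + #((a • E) \ E) := by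
  have hsub : (a * b) • E \ E ⊆ a • (b • E \ E) ∪ (a • E \ E) := by
    rw [mul_smul, smul_finset_sdiff]
    intro x hx
    by_cases hxa : x ∈ a • E <;> simp_all
  calc #(((a * b) • E) \ E) ≤ #(a • (b • E \ E) ∪ (a • E \ E)) := card_le_card hsub
    _ ≤ #(a • (b • E \ E)) + #((a • E) \ E) := card_union_le _ _
    _ = #((b • E) \ E) + #((a • E) \ E) := by rw [card_smul_finset]

theorem smul_finset_sdiff_subset_mul_sdiff {S : Finset G} {s : G} (hs : s ∈ S) (E : Finset G) :
    s • E \ E ⊆ (S * E) \ E :=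
  sdiff_subset_sdiff (smul_finset_subset_mul hs) subset_rfl

theorem card_smul_finset_sdiff_le_of_mem_pow (S E : Finset G) :
    ∀ (r : ℕ), ∀ g ∈ S ^ r, #((g • E) \ E) ≤ r * #((S * E) \ E)
  | 0, g, hg => by simp_all
  | r + 1, _, hg => by
    obtain ⟨s, hs, h, hh, rfl⟩ := mem_mul.mp (pow_succ' S r ▸ hg)
    calc #(((s * h) • E) \ E) ≤ #((h • E) \ E) + #((s • E) \ E) :=
          card_mul_smul_finset_sdiff_le s h E
      _ ≤ r * #((S * E) \ E) + #((S * E) \ E) :=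
        add_le_add (card_smul_finset_sdiff_le_of_mem_pow S E r h hh)
          (card_le_card (smul_finset_sdiff_subset_mul_sdiff hs E))
      _ = (r + 1) * #((S * E) \ E) := by ring

theorem sum_card_smul_finset_inter_le (B E F : Finset G) :
    ∑ g ∈ B, #(g • E ∩ F) ≤ #F * #E := by
  have hswap : ∑ g ∈ B, #(g • E ∩ F) = ∑ x ∈ F, #{g ∈ B | x ∈ g • E} := by
    simp_rw [inter_comm _ F, ← filter_mem_eq_inter, card_filter]
    exact sum_comm
  have hfiber (x : G) : #{g ∈ B | x ∈ g • E} ≤ #E := by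
    calc #{g ∈ B | x ∈ g • E} ≤ #(x • E⁻¹) := card_le_card fun g hg => by
          obtain ⟨e, he, rfl⟩ := mem_smul_finset.mp (mem_filter.mp hg).2
          exact mem_smul_finset.mpr ⟨e⁻¹, inv_mem_inv he, by simp [smul_eq_mul, mul_assoc]⟩
      _ = #E := by rw [card_smul_finset, card_inv]
  rw [hswap]
  exact sum_le_card_nsmul F _ _ fun x _ => hfiber x

theorem card_le_two_mul_card_mul_sdiff_of_le_card_pow {S E : Finset G} {r : ℕ}
    (hr : 2 * #E ≤ #(S ^ r)) : #E ≤ 2 * (r * #((S * E) \ E)) := by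
  set B := S ^ r
  have hsplit : #B * #E = ∑ g ∈ B, #(g • E ∩ E) + ∑ g ∈ B, #((g • E) \ E) := by
    simp_rw [← sum_add_distrib, card_inter_add_card_sdiff, card_smul_finset, sum_const,
      smul_eq_mul]
  have hinter := sum_card_smul_finset_inter_le B E E
  have hdiff : ∑ g ∈ B, #((g • E) \ E) ≤ #B * (r * #((S * E) \ E)) := by
    simpa using sum_le_card_nsmul B _ _ (card_smul_finset_sdiff_le_of_mem_pow S E r)
  rcases E.eq_empty_or_nonempty with rfl | hE
  · simp
  have hB : 0 < #B := by have := hE.card_pos; omega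
  have hhalf : 2 * (#E * #E) ≤ #B * #E := by rw [← mul_assoc]; exact Nat.mul_le_mul_right _ hr
  refine le_of_mul_le_mul_left ?_ hB
  linarith

end Finset

theorem isoperimetric_inequality_general {G : Type*} [Group G] [DecidableEq G]
    (S : Finset G)
    (E : Finset G)
    (r : ℕ) (hr1 : 2 * E.card ≤ (S ^ r).card) :
    E.card ≤ 4 * r * ((S * E) \ E).card := by
  have := Finset.card_le_two_mul_card_mul_sdiff_of_le_card_pow hr1
  nlinarith

theorem isoperimetric_inequality {G : Type*} [Group G] [DecidableEq G]
    (S : Finset G) (h1 : (1 : G) ∈ S) (hsym : S⁻¹ = S)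
    (hgen : Subgroup.closure (S : Set G) = ⊤)
    (E : Finset G)
    (hE : 2 * E.card < Nat.card G ∨ Infinite G)
    (r : ℕ) (hr1 : 2 * E.card ≤ (S ^ r).card)
    (hr2 : ∀ s < r, (S ^ s).card < 2 * E.card) :
    E.card ≤ 4 * r * ((S * E) \ E).card :=
  isoperimetric_inequality_general S E r hr1
end

section
/- Let G be a group with finite symmetric generating set S containing 1, and suppose that for some real d > 0 and integers n₀ ≤ n the growth bound |S^n| ≤ n^d |S| holds. Then for any integer m ≥ 2, provided n is sufficiently large depending on d and m, there exists an integer r₀ with √n ≤ r₀ ≤ n/m and |S^{m·r₀}| ≤ m^{2d}|S^{r₀}|. -/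
open Pointwise

section FreimanHelpers

variable {G : Type*} [Group G] [DecidableEq G]

/-- Key overlap estimate: if `|A·A| < (3/2)|A|` then every `x ∈ A·A` satisfies
`|xA ∩ A| > |A|/2`. -/
lemma freiman_overlap {A : Finset G} (hsym : A⁻¹ = A)
    (hsmall : 2 * (A * A).card < 3 * A.card) {x : G} (hx : x ∈ A * A) :
    A.card < 2 * ((x • A) ∩ A).card := by
  obtain ⟨a, ha, b, hb, rfl⟩ := Finset.mem_mul.mp hx
  have hainv : a⁻¹ ∈ A := by rw [← hsym]; exact Finset.inv_mem_inv ha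
  have key : (((a * b) • A) ∩ A).card = ((b • A) ∩ (a⁻¹ • A)).card := by
    have h1 : a⁻¹ • (((a * b) • A) ∩ A) = (b • A) ∩ (a⁻¹ • A) := by
      rw [Finset.smul_finset_inter, smul_smul, inv_mul_cancel_left]
    calc (((a * b) • A) ∩ A).card
        = (a⁻¹ • (((a * b) • A) ∩ A)).card := (Finset.card_smul_finset _ _).symm
      _ = ((b • A) ∩ (a⁻¹ • A)).card := by rw [h1]
  have hsub : (b • A) ∪ (a⁻¹ • A) ⊆ A * A := by
    apply Finset.union_subset
    · intro z hz
      obtain ⟨u, hu, rfl⟩ := Finset.mem_smul_finset.mp hz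
      rw [smul_eq_mul]
      exact Finset.mul_mem_mul hb hu
    · intro z hz
      obtain ⟨u, hu, rfl⟩ := Finset.mem_smul_finset.mp hz
      rw [smul_eq_mul]
      exact Finset.mul_mem_mul hainv hu
  have hint := Finset.card_inter_add_card_union (b • A) (a⁻¹ • A)
  have hcards : (b • A).card = A.card := Finset.card_smul_finset _ _
  have hcards' : (a⁻¹ • A).card = A.card := Finset.card_smul_finset _ _
  have hle : ((b • A) ∪ (a⁻¹ • A)).card ≤ (A * A).card := Finset.card_le_card hsub
  omega

/-- Freiman-type closure: if `A` is symmetric and `|A·A| < (3/2)|A|` then the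
product of two elements of `A·A` lies in `A·A`. -/
lemma freiman_mul {A : Finset G} (hsym : A⁻¹ = A)
    (hsmall : 2 * (A * A).card < 3 * A.card) {x y : G}
    (hx : x ∈ A * A) (hy : y ∈ A * A) : x * y ∈ A * A := by
  have hAAsym : (A * A)⁻¹ = A * A := by rw [mul_inv_rev, hsym]
  have hxinv : x⁻¹ ∈ A * A := by rw [← hAAsym]; exact Finset.inv_mem_inv hx
  have h1 := freiman_overlap hsym hsmall hy
  have h2 := freiman_overlap hsym hsmall hxinv
  have hXA : ((y • A) ∩ A) ⊆ A := Finset.inter_subset_right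
  have hYA : ((x⁻¹ • A) ∩ A) ⊆ A := Finset.inter_subset_right
  have hunion : (((y • A) ∩ A) ∪ ((x⁻¹ • A) ∩ A)).card ≤ A.card :=
    Finset.card_le_card (Finset.union_subset hXA hYA)
  have hint := Finset.card_inter_add_card_union ((y • A) ∩ A) ((x⁻¹ • A) ∩ A)
  have hne : (((y • A) ∩ A) ∩ ((x⁻¹ • A) ∩ A)).Nonempty := by
    rw [← Finset.card_pos]; omega
  obtain ⟨z, hz⟩ := hne
  simp only [Finset.mem_inter] at hz
  obtain ⟨⟨hz1, -⟩, hz2, -⟩ := hz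
  obtain ⟨u, hu, hzu⟩ := Finset.mem_smul_finset.mp hz1
  obtain ⟨v, hv, hzv⟩ := Finset.mem_smul_finset.mp hz2
  have huinv : u⁻¹ ∈ A := by rw [← hsym]; exact Finset.inv_mem_inv hu
  have heq : y * u = x⁻¹ * v := by
    have h := hzu.trans hzv.symm
    rwa [smul_eq_mul, smul_eq_mul] at h
  have hxyu : (x * y) * u = v := by rw [mul_assoc, heq, mul_inv_cancel_left]
  have : x * y = v * u⁻¹ := by rw [← hxyu]; group
  rw [this]
  exact Finset.mul_mem_mul hv huinv

end FreimanHelpers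

set_option maxHeartbeats 1000000 in
theorem growth_at_some_scale (d : ℝ) (hd : 0 < d) (m : ℕ) (hm : 2 ≤ m) :
    ∃ N : ℕ, ∀ (G : Type*) [Group G] [DecidableEq G] (S : Finset G),
      (1 : G) ∈ S → S⁻¹ = S → Subgroup.closure (S : Set G) = ⊤ →
      ∀ n : ℕ, N ≤ n → ((S ^ n).card : ℝ) ≤ (n : ℝ) ^ d * (S.card : ℝ) →
        ∃ r₀ : ℕ, Real.sqrt n ≤ (r₀ : ℝ) ∧ (r₀ : ℝ) ≤ (n : ℝ) / (m : ℝ) ∧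
          ((S ^ (m * r₀)).card : ℝ) ≤ (m : ℝ) ^ (2 * d) * ((S ^ r₀).card : ℝ) := by
  have hm0 : (0 : ℝ) < (m : ℝ) := by positivity
  have hm1 : (1 : ℝ) ≤ (m : ℝ) := by exact_mod_cast Nat.one_le_of_lt hm
  set C₂ : ℝ := (2 * (m : ℝ) ^ 2) ^ d with hC₂
  obtain ⟨K, hK⟩ := pow_unbounded_of_one_lt (R := ℝ) C₂ (by norm_num : (1 : ℝ) < 3 / 2)
  refine ⟨4 ^ (K + 1) + 16 * m ^ 2 + 64, ?_⟩
  intro G _ _ S hS1 hSsym _hSgen n hn hgrowth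
  -- basic numeric facts
  have hn64 : 64 ≤ n := le_trans (Nat.le_add_left 64 _) hn
  have hn16m : 16 * m ^ 2 ≤ n :=
    le_trans (le_trans (Nat.le_add_left (16 * m ^ 2) _) (Nat.le_add_right _ 64)) hn
  have hn4K : 4 ^ (K + 1) ≤ n :=
    le_trans (le_trans (Nat.le_add_right _ (16 * m ^ 2)) (Nat.le_add_right _ 64)) hn
  have hn0 : (0 : ℝ) < (n : ℝ) := by positivity
  set s : ℝ := Real.sqrt n with hs
  have hs0 : 0 ≤ s := Real.sqrt_nonneg _
  have hs2 : s ^ 2 = (n : ℝ) := Real.sq_sqrt (by positivity)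
  have hs8 : 8 ≤ s := by
    apply (Real.le_sqrt (by norm_num) (by positivity)).mpr
    have : (64 : ℝ) ≤ (n : ℝ) := by exact_mod_cast hn64
    nlinarith
  have hs4m : 4 * (m : ℝ) ≤ s := by
    apply (Real.le_sqrt (by positivity) (by positivity)).mpr
    have : (16 : ℝ) * (m : ℝ) ^ 2 ≤ (n : ℝ) := by exact_mod_cast hn16m
    nlinarith
  set R : ℕ := ⌈s⌉₊ with hR
  have hsR : s ≤ (R : ℝ) := Nat.le_ceil s
  have hRs1 : (R : ℝ) < s + 1 := Nat.ceil_lt_add_one hs0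
  have hR1 : 1 ≤ R := by
    have : (1 : ℝ) ≤ (R : ℝ) := by linarith
    exact_mod_cast this
  have hRn : R ≤ n := by
    have : (R : ℝ) < (n : ℝ) := by nlinarith
    exact le_of_lt (by exact_mod_cast this)
  have hR2n : (R : ℝ) ^ 2 ≤ 2 * (n : ℝ) := by nlinarith
  have h2mRn : m * (2 * R) ≤ n := by
    have : (m : ℝ) * (2 * (R : ℝ)) ≤ (n : ℝ) := by nlinarith
    exact_mod_cast this
  have hScard0 : (0 : ℝ) < (S.card : ℝ) := by
    have : 0 < S.card := Finset.card_pos.mpr ⟨1, hS1⟩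
    exact_mod_cast this
  by_cases hcase : ((S ^ R).card : ℝ) < C₂ * (S.card : ℝ)
  · -- Case 2 : ball at radius ≈ √n is small, find an almost-stable scale
    set L : ℕ := Nat.log 2 R with hL
    have hRK : 2 ^ (K + 1) ≤ R := by
      have h4 : ((2 : ℝ) ^ (K + 1)) ^ 2 ≤ (n : ℝ) := by
        have : ((2 : ℝ) ^ (K + 1)) ^ 2 = (4 : ℝ) ^ (K + 1) := by
          rw [← pow_mul, mul_comm, pow_mul]; norm_num
        rw [this]
        exact_mod_cast hn4K
      have h2s : (2 : ℝ) ^ (K + 1) ≤ s :=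
        (Real.le_sqrt (by positivity) (by positivity)).mpr h4
      have : ((2 : ℕ) ^ (K + 1) : ℝ) ≤ (R : ℝ) := by push_cast; linarith
      exact_mod_cast this
    have hKL : K + 1 ≤ L := by
      calc K + 1 = Nat.log 2 (2 ^ (K + 1)) := (Nat.log_pow (by norm_num) _).symm
        _ ≤ Nat.log 2 R := Nat.log_mono_right hRK
    have h2L : 2 ^ L ≤ R := Nat.pow_log_le_self 2 (by omega)
    have pig : ∃ i, i < L ∧ 2 * (S ^ 2 ^ (i + 1)).card < 3 * (S ^ 2 ^ i).card := by
      by_contra hpig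
      push_neg at hpig
      have ind : ∀ i, i ≤ L → ((3 : ℝ) / 2) ^ i * (S.card : ℝ) ≤ ((S ^ 2 ^ i).card : ℝ) := by
        intro i
        induction i with
        | zero => intro _; simp
        | succ i ih =>
          intro hi
          have h1 := ih (by omega)
          have h2 := hpig i (by omega)
          have h2' : ((S ^ 2 ^ i).card : ℝ) * 3 ≤ ((S ^ 2 ^ (i + 1)).card : ℝ) * 2 := by
            exact_mod_cast by omega
          calc ((3 : ℝ) / 2) ^ (i + 1) * (S.card : ℝ)
              = (3 / 2) * (((3 : ℝ) / 2) ^ i * (S.card : ℝ)) := by ring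
            _ ≤ (3 / 2) * ((S ^ 2 ^ i).card : ℝ) := by
                apply mul_le_mul_of_nonneg_left h1 (by norm_num)
            _ ≤ ((S ^ 2 ^ (i + 1)).card : ℝ) := by linarith
      have hLL := ind L le_rfl
      have hmono : ((S ^ 2 ^ L).card : ℝ) ≤ ((S ^ R).card : ℝ) := by
        exact_mod_cast Finset.card_le_card (Finset.pow_subset_pow_right hS1 h2L)
      have hKle : C₂ ≤ (3 / 2 : ℝ) ^ L :=
        le_trans hK.le (pow_le_pow_right₀ (by norm_num) (by omega))
      have : C₂ * (S.card : ℝ) ≤ ((S ^ R).card : ℝ) := by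
        calc C₂ * (S.card : ℝ) ≤ (3 / 2 : ℝ) ^ L * (S.card : ℝ) :=
              mul_le_mul_of_nonneg_right hKle hScard0.le
          _ ≤ ((S ^ 2 ^ L).card : ℝ) := hLL
          _ ≤ ((S ^ R).card : ℝ) := hmono
      linarith
    obtain ⟨i, hiL, hratio⟩ := pig
    set A : Finset G := S ^ 2 ^ i with hA
    have hA1 : (1 : G) ∈ A := Finset.one_mem_pow hS1
    have hAsym : A⁻¹ = A := by rw [hA, ← inv_pow, hSsym]
    have hAA : A * A = S ^ 2 ^ (i + 1) := by
      rw [hA, ← pow_add]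
      congr 1
      have : 2 ^ (i + 1) = 2 ^ i * 2 := pow_succ 2 i
      omega
    have hsmall : 2 * (A * A).card < 3 * A.card := by rw [hAA]; exact hratio
    have hSsubA : S ⊆ A := by
      have : S ^ 1 ⊆ S ^ 2 ^ i :=
        Finset.pow_subset_pow_right hS1 (Nat.one_le_two_pow)
      simpa using this
    have hSsub : S ⊆ A * A := by
      intro a haS
      exact Finset.mem_mul.mpr ⟨a, hSsubA haS, 1, hA1, mul_one a⟩
    have hall : ∀ t : ℕ, S ^ (t + 1) ⊆ A * A := by
      intro t
      induction t with
      | zero => simpa using hSsub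
      | succ t ih =>
        intro z hz
        rw [pow_succ] at hz
        obtain ⟨u, hu, v, hv, rfl⟩ := Finset.mem_mul.mp hz
        exact freiman_mul hAsym hsmall (ih hu) (hSsub hv)
    refine ⟨2 * R, ?_, ?_, ?_⟩
    · push_cast; linarith
    · rw [le_div_iff₀ hm0]
      have : ((m * (2 * R) : ℕ) : ℝ) ≤ (n : ℝ) := by exact_mod_cast h2mRn
      push_cast at this ⊢
      linarith
    · have hsub1 : S ^ (m * (2 * R)) ⊆ A * A := by
        obtain ⟨t, ht⟩ : ∃ t, m * (2 * R) = t + 1 := by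
          refine ⟨m * (2 * R) - 1, ?_⟩
          have h0 : 0 < m * (2 * R) := Nat.mul_pos (by omega) (by omega)
          omega
        rw [ht]; exact hall t
      have hsub2 : (A * A : Finset G) ⊆ S ^ (2 * R) := by
        rw [hAA]
        apply Finset.pow_subset_pow_right hS1
        have h1 : 2 ^ (i + 1) ≤ 2 ^ L := Nat.pow_le_pow_right (by norm_num) (by omega)
        omega
      have hcard : ((S ^ (m * (2 * R))).card : ℝ) ≤ ((S ^ (2 * R)).card : ℝ) := by
        exact_mod_cast Finset.card_le_card (hsub1.trans hsub2)
      have hone : (1 : ℝ) ≤ (m : ℝ) ^ (2 * d) := by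
        rw [← Real.one_rpow (2 * d)]
        exact Real.rpow_le_rpow (by norm_num) hm1 (by positivity)
      calc ((S ^ (m * (2 * R))).card : ℝ) ≤ ((S ^ (2 * R)).card : ℝ) := hcard
        _ = 1 * ((S ^ (2 * R)).card : ℝ) := (one_mul _).symm
        _ ≤ (m : ℝ) ^ (2 * d) * ((S ^ (2 * R)).card : ℝ) :=
            mul_le_mul_of_nonneg_right hone (Nat.cast_nonneg _)
  · -- Case 1 : the ball at radius ≈ √n is large; iterate the failing inequality
    push_neg at hcase
    by_contra hcon
    push_neg at hcon
    set J : ℕ := Nat.log m (n / R) with hJ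
    have hnR0 : n / R ≠ 0 := by
      have := Nat.div_pos hRn (by omega)
      omega
    have hJR : m ^ J * R ≤ n := by
      calc m ^ J * R ≤ (n / R) * R :=
            Nat.mul_le_mul_right R (Nat.pow_log_le_self m hnR0)
        _ ≤ n := Nat.div_mul_le_self n R
    have hJ1 : n < R * m ^ (J + 1) := by
      have h1 : n / R < m ^ (J + 1) := Nat.lt_pow_succ_log_self hm (n / R)
      have h2 : n / R + 1 ≤ m ^ (J + 1) := h1
      have h3 := Nat.div_add_mod n R
      have h4 : n % R < R := Nat.mod_lt n (by omega)
      calc n < R * (n / R + 1) := Nat.lt_mul_div_succ n (by omega)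
        _ ≤ R * m ^ (J + 1) := Nat.mul_le_mul_left R h2
    have chain : ∀ i, i ≤ J →
        (m : ℝ) ^ (2 * d * (i : ℝ)) * ((S ^ R).card : ℝ) ≤ ((S ^ (m ^ i * R)).card : ℝ) := by
      intro i
      induction i with
      | zero => intro _; norm_num
      | succ i ih =>
        intro hi
        have hIH := ih (by omega)
        have hr_sqrt : Real.sqrt n ≤ ((m ^ i * R : ℕ) : ℝ) := by
          have h1 : R ≤ m ^ i * R := by
            have h0 : 1 ≤ m ^ i := Nat.one_le_pow _ _ (by omega)
            calc R = 1 * R := (one_mul R).symm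
              _ ≤ m ^ i * R := Nat.mul_le_mul_right R h0
          have : (R : ℝ) ≤ ((m ^ i * R : ℕ) : ℝ) := by exact_mod_cast h1
          linarith
        have hr_div : ((m ^ i * R : ℕ) : ℝ) ≤ (n : ℝ) / (m : ℝ) := by
          rw [le_div_iff₀ hm0]
          have h1 : m ^ (i + 1) * R ≤ m ^ J * R :=
            Nat.mul_le_mul_right R (Nat.pow_le_pow_right (by omega) hi)
          have h2 : m ^ (i + 1) * R ≤ n := le_trans h1 hJR
          have h2' : (m ^ i * R) * m ≤ n := by
            have he : (m ^ i * R) * m = m ^ (i + 1) * R := by rw [pow_succ]; ring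
            rw [he]; exact h2
          exact_mod_cast h2'
        have hstep := hcon (m ^ i * R) hr_sqrt hr_div
        have hmr : m ^ (i + 1) * R = m * (m ^ i * R) := by rw [pow_succ]; ring
        rw [hmr]
        have hexp : 2 * d * ((i + 1 : ℕ) : ℝ) = 2 * d + 2 * d * (i : ℝ) := by
          push_cast; ring
        rw [hexp, Real.rpow_add hm0, mul_assoc]
        calc (m : ℝ) ^ (2 * d) * ((m : ℝ) ^ (2 * d * (i : ℝ)) * ((S ^ R).card : ℝ))
            ≤ (m : ℝ) ^ (2 * d) * ((S ^ (m ^ i * R)).card : ℝ) :=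
              mul_le_mul_of_nonneg_left hIH (Real.rpow_nonneg hm0.le _)
          _ ≤ ((S ^ (m * (m ^ i * R))).card : ℝ) := le_of_lt hstep
    have hJle := chain J le_rfl
    have hsubJ : S ^ (m ^ J * R) ⊆ S ^ n := Finset.pow_subset_pow_right hS1 hJR
    have hmonoN : (S ^ (m ^ J * R)).card ≤ (S ^ n).card := Finset.card_le_card hsubJ
    have hmono : ((S ^ (m ^ J * R)).card : ℝ) ≤ ((S ^ n).card : ℝ) := by exact_mod_cast hmonoN
    have htot : (m : ℝ) ^ (2 * d * (J : ℝ)) * ((S ^ R).card : ℝ) ≤ (n : ℝ) ^ d * (S.card : ℝ) :=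
      le_trans hJle (le_trans hmono hgrowth)
    -- numeric : n < 2 m² (m^J)²
    have hJ1' : (n : ℝ) < (R : ℝ) * (m : ℝ) ^ (J + 1) := by exact_mod_cast hJ1
    have hlt : (n : ℝ) < 2 * (m : ℝ) ^ 2 * ((m : ℝ) ^ J) ^ 2 := by
      have hMR : (0 : ℝ) ≤ (R : ℝ) * (m : ℝ) ^ (J + 1) := by positivity
      have h1 : (n : ℝ) * (n : ℝ) < ((R : ℝ) * (m : ℝ) ^ (J + 1)) * ((R : ℝ) * (m : ℝ) ^ (J + 1)) :=
        mul_self_lt_mul_self hn0.le hJ1'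
      have hMsq : ((m : ℝ) ^ (J + 1)) ^ 2 = (m : ℝ) ^ 2 * ((m : ℝ) ^ J) ^ 2 := by
        rw [pow_succ]; ring
      nlinarith [hR2n, sq_nonneg ((m : ℝ) ^ (J + 1)), hn0]
    have hrpow : (n : ℝ) ^ d < C₂ * (m : ℝ) ^ (2 * d * (J : ℝ)) := by
      have h1 : (n : ℝ) ^ d < (2 * (m : ℝ) ^ 2 * ((m : ℝ) ^ J) ^ 2) ^ d :=
        Real.rpow_lt_rpow hn0.le hlt hd
      have h2 : (2 * (m : ℝ) ^ 2 * ((m : ℝ) ^ J) ^ 2) ^ d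
          = C₂ * (((m : ℝ) ^ J) ^ 2) ^ d := by
        rw [hC₂, ← Real.mul_rpow (by positivity) (by positivity)]
      have h3 : (((m : ℝ) ^ J) ^ 2) ^ d = (m : ℝ) ^ (2 * d * (J : ℝ)) := by
        have : ((m : ℝ) ^ J) ^ 2 = (m : ℝ) ^ (J * 2) := by rw [pow_mul]
        rw [this, ← Real.rpow_natCast (m : ℝ) (J * 2), ← Real.rpow_mul hm0.le]
        congr 1
        push_cast; ring
      calc (n : ℝ) ^ d < (2 * (m : ℝ) ^ 2 * ((m : ℝ) ^ J) ^ 2) ^ d := h1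
        _ = C₂ * (((m : ℝ) ^ J) ^ 2) ^ d := h2
        _ = C₂ * (m : ℝ) ^ (2 * d * (J : ℝ)) := by rw [h3]
    have hpos2 : (0 : ℝ) < (m : ℝ) ^ (2 * d * (J : ℝ)) := Real.rpow_pos_of_pos hm0 _
    have hA : (m : ℝ) ^ (2 * d * (J : ℝ)) * (C₂ * (S.card : ℝ)) ≤ (n : ℝ) ^ d * (S.card : ℝ) :=
      le_trans (mul_le_mul_of_nonneg_left hcase hpos2.le) htot
    have hB : (n : ℝ) ^ d * (S.card : ℝ) < (C₂ * (m : ℝ) ^ (2 * d * (J : ℝ))) * (S.card : ℝ) :=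
      mul_lt_mul_of_pos_right hrpow hScard0
    nlinarith [hA, hB]
end

section
/- Let K ≥ 1 and let A, B be finite nonempty subsets of a group G with |A·B| ≤ K·|A|^{1/2}·|B|^{1/2}. Then |A·A⁻¹| ≤ K²·max(|A|,|B|) and there exists x ∈ G such that |A ∩ x·B⁻¹| ≥ |A|^{1/2}|B|^{1/2}/K; in particular if |A| = |B| then some translate of B⁻¹ meets A in at least |A|/K elements. -/
open Pointwise

lemma fiber_card_eq {G : Type*} [Group G] [DecidableEq G] (A B : Finset G) (y : G) :
    ((A ×ˢ B).filter (fun p => p.1 * p.2 = y)).card = (A ∩ ({y} * B⁻¹)).card := by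
  apply Finset.card_bij (fun p _ => p.1)
  · rintro ⟨a, b⟩ hp
    simp only [Finset.mem_filter, Finset.mem_product] at hp
    obtain ⟨⟨ha, hb⟩, hab⟩ := hp
    simp only [Finset.mem_inter, Finset.mem_mul, Finset.mem_singleton, Finset.mem_inv]
    exact ⟨ha, y, rfl, b⁻¹, ⟨b, hb, rfl⟩, by rw [← hab]; group⟩
  · rintro ⟨a, b⟩ hp ⟨a', b'⟩ hp' hab
    simp only [Finset.mem_filter, Finset.mem_product] at hp hp'
    simp only at hab
    subst hab
    have : b = b' := by
      have := hp.2.trans hp'.2.symm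
      exact mul_left_cancel this
    simp [this]
  · intro a ha
    simp only [Finset.mem_inter, Finset.mem_mul, Finset.mem_singleton, Finset.mem_inv] at ha
    obtain ⟨ha, u, hu, v, ⟨b, hb, hbv⟩, hc⟩ := ha
    refine ⟨(a, a⁻¹ * y), ?_, rfl⟩
    simp only [Finset.mem_filter, Finset.mem_product]
    have hb' : a⁻¹ * y = b := by rw [← hu, ← hc, ← hbv]; group
    exact ⟨⟨ha, hb' ▸ hb⟩, by group⟩

theorem doubling_consequences {G : Type*} [Group G] [DecidableEq G]
    (K : ℝ) (hK : 1 ≤ K) (A B : Finset G) (hA : A.Nonempty) (hB : B.Nonempty)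
    (h : ((A * B).card : ℝ) ≤ K * Real.sqrt ((A.card : ℝ) * (B.card : ℝ))) :
    ((A * A⁻¹).card : ℝ) ≤ K ^ 2 * max (A.card : ℝ) (B.card : ℝ) ∧
      (∃ x : G, Real.sqrt ((A.card : ℝ) * (B.card : ℝ)) / K ≤
          ((A ∩ ({x} * B⁻¹)).card : ℝ)) ∧
      (A.card = B.card → ∃ x : G, (A.card : ℝ) / K ≤ ((A ∩ ({x} * B⁻¹)).card : ℝ)) := by
  have hK0 : (0 : ℝ) < K := lt_of_lt_of_le one_pos hK
  have hA0 : (0 : ℝ) < A.card := by exact_mod_cast hA.card_pos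
  have hB0 : (0 : ℝ) < B.card := by exact_mod_cast hB.card_pos
  have hAB0 : (0 : ℝ) < (A.card : ℝ) * B.card := mul_pos hA0 hB0
  have hsq : Real.sqrt ((A.card : ℝ) * B.card) ^ 2 = (A.card : ℝ) * B.card :=
    Real.sq_sqrt hAB0.le
  have hsq0 : (0 : ℝ) < Real.sqrt ((A.card : ℝ) * B.card) := Real.sqrt_pos.2 hAB0
  constructor
  · -- Ruzsa triangle
    have hruzsa := Finset.ruzsa_triangle_inequality_mulInv_mul_mul A B A
    have hruzsa' : ((A * A⁻¹).card : ℝ) * B.card ≤ ((A * B).card : ℝ) * (A * B).card := by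
      exact_mod_cast hruzsa
    have hABcard0 : (0 : ℝ) ≤ ((A * B).card : ℝ) := Nat.cast_nonneg _
    have h2 : ((A * B).card : ℝ) * (A * B).card ≤ K ^ 2 * ((A.card : ℝ) * B.card) := by
      calc ((A * B).card : ℝ) * (A * B).card
          ≤ (K * Real.sqrt ((A.card : ℝ) * B.card)) * (K * Real.sqrt ((A.card : ℝ) * B.card)) :=
            mul_le_mul h h hABcard0 (by positivity)
        _ = K ^ 2 * Real.sqrt ((A.card : ℝ) * B.card) ^ 2 := by ring
        _ = K ^ 2 * ((A.card : ℝ) * B.card) := by rw [hsq]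
    have h3 : ((A * A⁻¹).card : ℝ) * B.card ≤ K ^ 2 * ((A.card : ℝ) * B.card) :=
      hruzsa'.trans h2
    have h4 : ((A * A⁻¹).card : ℝ) ≤ K ^ 2 * A.card := by
      rw [show K ^ 2 * ((A.card : ℝ) * B.card) = (K ^ 2 * A.card) * B.card by ring] at h3
      exact le_of_mul_le_mul_right h3 hB0
    exact h4.trans (by
      have : (A.card : ℝ) ≤ max (A.card : ℝ) (B.card : ℝ) := le_max_left _ _
      nlinarith [sq_nonneg K])
  · -- pigeonhole
    have key : ∃ x : G, Real.sqrt ((A.card : ℝ) * B.card) / K ≤ ((A ∩ ({x} * B⁻¹)).card : ℝ) := by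
      have hmaps : ∀ p ∈ A ×ˢ B, p.1 * p.2 ∈ A * B := by
        rintro ⟨a, b⟩ hp
        simp only [Finset.mem_product] at hp
        exact Finset.mul_mem_mul hp.1 hp.2
      have hsum : ∑ y ∈ A * B, (((A ×ˢ B).filter (fun p => p.1 * p.2 = y)).card : ℝ)
          = (A.card : ℝ) * B.card := by
        rw [← Nat.cast_sum]
        rw [← Finset.card_eq_sum_card_fiberwise hmaps]
        push_cast [Finset.card_product]
        ring
      have hne : (A * B).Nonempty := hA.mul hB
      have hABc0 : (0 : ℝ) < ((A * B).card : ℝ) := by exact_mod_cast hne.card_pos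
      have havg : ∃ y ∈ A * B, (A.card : ℝ) * B.card / (A * B).card
          ≤ (((A ×ˢ B).filter (fun p => p.1 * p.2 = y)).card : ℝ) := by
        by_contra hcon
        push_neg at hcon
        have : ∑ y ∈ A * B, (((A ×ˢ B).filter (fun p => p.1 * p.2 = y)).card : ℝ)
            < ∑ _y ∈ A * B, (A.card : ℝ) * B.card / (A * B).card :=
          Finset.sum_lt_sum_of_nonempty hne hcon
        rw [hsum, Finset.sum_const, nsmul_eq_mul,
          mul_div_cancel₀ _ hABc0.ne'] at this
        exact lt_irrefl _ this
      obtain ⟨y, _, hy⟩ := havg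
      refine ⟨y, ?_⟩
      rw [fiber_card_eq] at hy
      refine le_trans ?_ hy
      rw [div_le_div_iff₀ hK0 hABc0]
      calc Real.sqrt ((A.card : ℝ) * B.card) * (A * B).card
          ≤ Real.sqrt ((A.card : ℝ) * B.card) * (K * Real.sqrt ((A.card : ℝ) * B.card)) :=
            mul_le_mul_of_nonneg_left h hsq0.le
        _ = Real.sqrt ((A.card : ℝ) * B.card) ^ 2 * K := by ring
        _ = (A.card : ℝ) * B.card * K := by rw [hsq]
    refine ⟨key, fun hcard => ?_⟩
    obtain ⟨x, hx⟩ := key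
    refine ⟨x, ?_⟩
    rwa [← hcard, show ((A.card : ℝ) * A.card) = (A.card : ℝ) ^ 2 by ring,
      Real.sqrt_sq hA0.le] at hx
end
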